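/- For every n ≥ 1, every k ≥ 2, every ℓ ≥ 1, every assignment g : Fin n → Fin ℓ of bidders to expertise groups, and every family of nonnegative valuations v_i that are weakly increasing with respect to the pointwise order on profiles and symmetric within expertise groups, there exists a mechanism (x, p) that is ex-post incentive compatible and ex-post individually rational and whose revenue k·(ℓ·(k·(k−1)/2)+1)-approximates the optimal welfare, i.e., for every signal profile s, ∑_i p_i(s) ≥ max_i v_i(s) / (k·(ℓ·(k(k−1)/2)+1)). -/

import Mathlib

/-!
Let `W i s` be the set of signals `t` at which bidder `i` would be a (fixed) welfare maximiser
after reporting `t`; it does not depend on `s i`. The mechanism climbs a ladder of posted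
prices: for every `t ∈ W i s` with `t ≤ s i`, bidder `i` gets the item with probability `1 / D`
and pays `v i (update s i t) / D`. Monotonicity of `v i` makes this ex-post IC and IR.
Only the winner has its own signal in `W i s`, and a pair `(i, t)` with `t < s i`, `t ∈ W i s`
is determined by `(g i, s i, t)`, since two bidders of one group with equal signals are
interchangeable. Hence the allocations sum to at most `(ℓ · k(k-1)/2 + 1) / D = 1`, while the
winner alone pays at least its value divided by `D`.
-/

open Finset Function

theorem sum_filter_le_le_sum_filter_le {σ M : Type*} [LinearOrder σ] [AddCommMonoid M]
    [PartialOrder M] [IsOrderedAddMonoid M] {S : Finset σ} {f : σ → M} {a : σ}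
    (h_le : ∀ t ∈ S, t ≤ a → 0 ≤ f t) (h_lt : ∀ t ∈ S, a < t → f t ≤ 0) (r : σ) :
    ∑ t ∈ S with t ≤ r, f t ≤ ∑ t ∈ S with t ≤ a, f t := by
  rw [sum_filter, sum_filter]
  refine sum_le_sum fun t ht => ?_
  by_cases hr : t ≤ r <;> by_cases ha : t ≤ a <;> simp only [hr, ha, if_true, if_false, le_refl]
  exacts [h_lt t ht (not_le.1 ha), h_le t ht ha]

theorem card_filter_le_eq_card_filter_lt_add {σ : Type*} [LinearOrder σ] (S : Finset σ) (a : σ) :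
    #{t ∈ S | t ≤ a} = #{t ∈ S | t < a} + if a ∈ S then 1 else 0 := by
  simp_rw [le_iff_lt_or_eq, filter_or]
  rw [card_union_of_disjoint (disjoint_filter.2 fun _ _ h h' => h.ne h'), filter_eq']
  split_ifs <;> simp

theorem card_filter_snd_lt_fst_fin (k : ℕ) : #{p : Fin k × Fin k | p.2 < p.1} = k.choose 2 := by
  rw [card_filter, Fintype.sum_prod_type]
  simp_rw [← card_filter, filter_gt_eq_Iio, Fin.card_Iio]
  rw [Fin.sum_univ_eq_sum_range (fun i => i) k, sum_range_id, Nat.choose_two_right]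

theorem comp_swap_of_apply_eq {α β : Type*} [DecidableEq α] {f : α → β} {i j : α}
    (h : f i = f j) : f ∘ Equiv.swap i j = f := by
  rw [Equiv.comp_swap_eq_update, h, update_eq_self, ← h, update_eq_self]

section Ladder

variable {ι σ : Type*} [LinearOrder σ] {v : ι → (ι → σ) → ℝ} {T : (ι → σ) → ι → Finset σ}
  {D : ℝ}

noncomputable def ladderAllocation (T : (ι → σ) → ι → Finset σ) (D : ℝ) (s : ι → σ) (i : ι) :
    ℝ :=
  #{t ∈ T s i | t ≤ s i} / D

theorem ladderAllocation_nonneg (hD : 0 ≤ D) (s : ι → σ) (i : ι) :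
    0 ≤ ladderAllocation T D s i :=
  div_nonneg (Nat.cast_nonneg _) hD

variable [DecidableEq ι]

noncomputable def ladderPayment (v : ι → (ι → σ) → ℝ) (T : (ι → σ) → ι → Finset σ) (D : ℝ)
    (s : ι → σ) (i : ι) : ℝ :=
  (∑ t ∈ T s i with t ≤ s i, v i (update s i t)) / D

theorem ladderPayment_nonneg (hv : ∀ i s, 0 ≤ v i s) (hD : 0 ≤ D) (s : ι → σ) (i : ι) :
    0 ≤ ladderPayment v T D s i :=
  div_nonneg (sum_nonneg fun _ _ => hv _ _) hD

theorem ladderAllocation_mul_sub_ladderPayment (w : ℝ) (s : ι → σ) (i : ι) :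
    ladderAllocation T D s i * w - ladderPayment v T D s i =
      (∑ t ∈ T s i with t ≤ s i, (w - v i (update s i t))) / D := by
  rw [ladderAllocation, ladderPayment, div_mul_eq_mul_div, div_sub_div_same, sum_sub_distrib,
    sum_const, nsmul_eq_mul]

theorem ladder_individuallyRational (hv : ∀ i, Monotone (v i)) (hD : 0 ≤ D) (s : ι → σ)
    (i : ι) : 0 ≤ ladderAllocation T D s i * v i s - ladderPayment v T D s i := by
  rw [ladderAllocation_mul_sub_ladderPayment]
  refine div_nonneg (sum_nonneg fun t ht => ?_) hD
  exact sub_nonneg.2 (hv i (update_le_self_iff.2 (mem_filter.1 ht).2))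

theorem ladder_incentiveCompatible (hT : ∀ s i r, T (update s i r) i = T s i)
    (hv : ∀ i, Monotone (v i)) (hD : 0 ≤ D) (s : ι → σ) (i : ι) (r : σ) :
    ladderAllocation T D (update s i r) i * v i s - ladderPayment v T D (update s i r) i ≤
      ladderAllocation T D s i * v i s - ladderPayment v T D s i := by
  rw [ladderAllocation_mul_sub_ladderPayment, ladderAllocation_mul_sub_ladderPayment, hT,
    update_self]
  simp only [update_idem]
  refine div_le_div_of_nonneg_right (sum_filter_le_le_sum_filter_le (fun t _ ht => ?_)
    (fun t _ ht => ?_) r) hD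
  · exact sub_nonneg.2 (hv i (update_le_self_iff.2 ht))
  · exact sub_nonpos.2 (hv i (le_update_self_iff.2 ht.le))

end Ladder

section Winner

variable {ι σ G : Type*} [Finite ι] [Nonempty ι] (v : ι → (ι → σ) → ℝ)

/-- A welfare-maximising bidder, chosen as a function of the value vector `fun j => v j s`
alone; this is what makes the choice compatible with the symmetry of the valuations. -/
noncomputable def winner (s : ι → σ) : ι :=
  Classical.choose (Finite.exists_max fun j => v j s)

theorem le_winner (s : ι → σ) (j : ι) : v j s ≤ v (winner v s) s :=
  Classical.choose_spec (Finite.exists_max fun j => v j s) j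

theorem winner_congr {s s' : ι → σ} (h : ∀ j, v j s = v j s') : winner v s = winner v s' := by
  simp only [winner, h]

variable [DecidableEq ι]

theorem eq_of_winner_update_eq {g : ι → G}
    (hv_sym : ∀ j (s : ι → σ) (π : Equiv.Perm ι), g ∘ π = g → v j (s ∘ π) = v j s)
    {s : ι → σ} {i i' : ι} {t : σ} (hg : g i = g i') (hs : s i = s i')
    (hi : winner v (update s i t) = i) (hi' : winner v (update s i' t) = i') : i = i' := by
  have hperm : update s i t ∘ Equiv.swap i i' = update s i' t := by
    rw [update_comp_equiv, Equiv.symm_swap, Equiv.swap_apply_left, comp_swap_of_apply_eq hs]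
  calc i = winner v (update s i t) := hi.symm
    _ = winner v (update s i' t) := by
      rw [← hperm]
      exact winner_congr v fun j => (hv_sym j _ _ (comp_swap_of_apply_eq hg)).symm
    _ = i' := hi'

variable [Fintype σ]

noncomputable def winningSignals (s : ι → σ) (i : ι) : Finset σ :=
  {t | winner v (update s i t) = i}

theorem winningSignals_update (s : ι → σ) (i : ι) (r : σ) :
    winningSignals v (update s i r) i = winningSignals v s i := by
  simp only [winningSignals, update_idem]

theorem self_mem_winningSignals_iff {s : ι → σ} {i : ι} :
    s i ∈ winningSignals v s i ↔ winner v s = i := by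
  simp [winningSignals]

end Winner

section

variable {ι σ G : Type*} [Fintype ι] [Nonempty ι] [DecidableEq ι] [Fintype σ] [LinearOrder σ]
  [Fintype G] {v : ι → (ι → σ) → ℝ}

theorem sum_card_winningSignals_lt_le {g : ι → G}
    (hv_sym : ∀ j (s : ι → σ) (π : Equiv.Perm ι), g ∘ π = g → v j (s ∘ π) = v j s)
    (s : ι → σ) :
    ∑ i, #{t ∈ winningSignals v s i | t < s i} ≤ Fintype.card G * #{p : σ × σ | p.2 < p.1} := by
  rw [← card_sigma, ← card_univ, ← card_product]
  refine card_le_card_of_injOn (fun q => (g q.1, s q.1, q.2)) ?_ ?_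
  · rintro ⟨i, t⟩ h
    simp only [coe_sigma, Set.mem_sigma_iff, mem_coe, mem_filter, mem_univ, true_and] at h
    simpa using h.2
  · rintro ⟨i, t⟩ h ⟨i', t'⟩ h' heq
    simp only [coe_sigma, Set.mem_sigma_iff, mem_coe, mem_filter, mem_univ, true_and,
      winningSignals] at h h'
    simp only [Prod.mk.injEq] at heq
    obtain ⟨hg, hs, rfl⟩ := heq
    obtain rfl := eq_of_winner_update_eq v hv_sym hg hs h.1 h'.1
    rfl

theorem sum_card_winningSignals_le_le {g : ι → G}
    (hv_sym : ∀ j (s : ι → σ) (π : Equiv.Perm ι), g ∘ π = g → v j (s ∘ π) = v j s)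
    (s : ι → σ) :
    ∑ i, #{t ∈ winningSignals v s i | t ≤ s i} ≤
      Fintype.card G * #{p : σ × σ | p.2 < p.1} + 1 := by
  simp_rw [card_filter_le_eq_card_filter_lt_add, self_mem_winningSignals_iff]
  rw [sum_add_distrib, sum_ite_eq]
  simpa using sum_card_winningSignals_lt_le hv_sym s

theorem le_sum_ladderPayment_winningSignals (hv : ∀ i s, 0 ≤ v i s) {D : ℝ} (hD : 0 ≤ D)
    (s : ι → σ) (j : ι) : v j s / D ≤ ∑ i, ladderPayment v (winningSignals v) D s i := by
  set w := winner v s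
  calc v j s / D ≤ v w s / D := div_le_div_of_nonneg_right (le_winner v s j) hD
    _ ≤ ladderPayment v (winningSignals v) D s w := by
      refine div_le_div_of_nonneg_right ?_ hD
      have hmem : s w ∈ {t ∈ winningSignals v s w | t ≤ s w} :=
        mem_filter.2 ⟨self_mem_winningSignals_iff v |>.2 rfl, le_rfl⟩
      simpa using single_le_sum (fun t _ => hv w (update s w t)) hmem
    _ ≤ ∑ i, ladderPayment v (winningSignals v) D s i :=
      single_le_sum (fun i _ => ladderPayment_nonneg hv hD s i) (mem_univ w)

end

theorem general_valuations_revenue_upper_bound_general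
    (n k ℓ : ℕ) (hn : 1 ≤ n)
    (g : Fin n → Fin ℓ)
    (v : Fin n → (Fin n → Fin k) → ℝ)
    (hv_nonneg : ∀ i s, 0 ≤ v i s)
    (hv_mono : ∀ i, Monotone (v i))
    (hv_sym : ∀ (j : Fin n) (s : Fin n → Fin k) (π : Equiv.Perm (Fin n)),
      g ∘ π = g → v j (s ∘ π) = v j s) :
    ∃ x p : (Fin n → Fin k) → Fin n → ℝ,
      (∀ s i, 0 ≤ x s i) ∧ (∀ s, ∑ i, x s i ≤ 1) ∧
      (∀ s i, 0 ≤ p s i) ∧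
      (∀ (i : Fin n) (s : Fin n → Fin k) (t : Fin k),
        x s i * v i s - p s i ≥
          x (Function.update s i t) i * v i s - p (Function.update s i t) i) ∧
      (∀ (i : Fin n) (s : Fin n → Fin k), x s i * v i s - p s i ≥ 0) ∧
      (∀ s : Fin n → Fin k,
        ∑ i, p s i ≥
          Finset.univ.sup' ⟨⟨0, hn⟩, Finset.mem_univ _⟩ (fun i => v i s) /
            ((k : ℝ) * ((ℓ : ℝ) * ((k : ℝ) * ((k : ℝ) - 1) / 2) + 1))) := by
  have : Nonempty (Fin n) := ⟨⟨0, hn⟩⟩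
  set D : ℝ := ℓ * (k * (k - 1) / 2) + 1
  have hD : D = Fintype.card (Fin ℓ) * #{p : Fin k × Fin k | p.2 < p.1} + 1 := by
    rw [card_filter_snd_lt_fst_fin, Nat.cast_choose_two, Fintype.card_fin]
  have hD_pos : 0 < D := by rw [hD]; positivity
  refine ⟨ladderAllocation (winningSignals v) D, ladderPayment v (winningSignals v) D,
    ladderAllocation_nonneg hD_pos.le, fun s => ?_, ladderPayment_nonneg hv_nonneg hD_pos.le,
    fun i s t => ladder_incentiveCompatible (winningSignals_update v) hv_mono hD_pos.le s i t,
    fun i s => ladder_individuallyRational hv_mono hD_pos.le s i, fun s => ?_⟩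
  · simp only [ladderAllocation]
    rw [← sum_div, div_le_one hD_pos, hD]
    exact_mod_cast sum_card_winningSignals_le_le hv_sym s
  · have hk : (1 : ℝ) ≤ k := by exact_mod_cast (s ⟨0, hn⟩).pos
    obtain ⟨j, -, hj⟩ := exists_mem_eq_sup' ⟨⟨0, hn⟩, mem_univ _⟩ fun i => v i s
    rw [hj]
    calc v j s / (k * D) ≤ v j s / D :=
          div_le_div_of_nonneg_left (hv_nonneg j s) hD_pos (le_mul_of_one_le_left hD_pos.le hk)
      _ ≤ _ := le_sum_ladderPayment_winningSignals hv_nonneg hD_pos.le s j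

/-- For every `n ≥ 1`, `k ≥ 2`, `ℓ ≥ 1`, group assignment `g`, and every
family of nonnegative valuations that are weakly increasing (pointwise order) and
symmetric within expertise groups, there exists an ex-post IC and ex-post IR mechanism
`(x, p)` whose revenue `k·(ℓ·(k(k-1)/2)+1)`-approximates the optimal welfare. -/
theorem general_valuations_revenue_upper_bound
    (n k ℓ : ℕ) (hn : 1 ≤ n) (hk : 2 ≤ k) (hℓ : 1 ≤ ℓ)
    (g : Fin n → Fin ℓ)
    (v : Fin n → (Fin n → Fin k) → ℝ)
    (hv_nonneg : ∀ i s, 0 ≤ v i s)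
    (hv_mono : ∀ i, Monotone (v i))
    (hv_sym : ∀ (j : Fin n) (s : Fin n → Fin k) (π : Equiv.Perm (Fin n)),
      g ∘ π = g → v j (s ∘ π) = v j s) :
    ∃ x p : (Fin n → Fin k) → Fin n → ℝ,
      (∀ s i, 0 ≤ x s i) ∧ (∀ s, ∑ i, x s i ≤ 1) ∧
      (∀ s i, 0 ≤ p s i) ∧
      (∀ (i : Fin n) (s : Fin n → Fin k) (t : Fin k),
        x s i * v i s - p s i ≥
          x (Function.update s i t) i * v i s - p (Function.update s i t) i) ∧
      (∀ (i : Fin n) (s : Fin n → Fin k), x s i * v i s - p s i ≥ 0) ∧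
      (∀ s : Fin n → Fin k,
        ∑ i, p s i ≥
          Finset.univ.sup' ⟨⟨0, hn⟩, Finset.mem_univ _⟩ (fun i => v i s) /
            ((k : ℝ) * ((ℓ : ℝ) * ((k : ℝ) * ((k : ℝ) - 1) / 2) + 1))) :=
  general_valuations_revenue_upper_bound_general n k ℓ hn g v hv_nonneg hv_mono hv_sym
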